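/- arXiv:2412.07884 — 4 statements merged into one kernel-verified Lean document; each statement's English description precedes it below -/
import Mathlib

section
/- Let q be a prime power and n ≥ 1. The F_q-order of every additive character of F_{q^n} is a monic divisor of x^n − 1, and for each monic divisor f ∈ F_q[x] of x^n − 1, there exist exactly Φ_q(f) additive characters of F_{q^n} with F_q-order equal to f. -/
open Polynomial

noncomputable section

/-- `f ∘ α := Σ a_i α^{q^i}` for `f = Σ a_i x^i ∈ F_q[x]` and `α` in an extension. -/
def circQ {K L : Type*} [Field K] [Field L] [Algebra K L] (q : ℕ) (f : K[X]) (α : L) : L :=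
  ∑ i ∈ f.support, algebraMap K L (f.coeff i) * α ^ q ^ i

/-- `m` is the `F_q`-order of the additive character `ψ`: the monic generator of the
ideal of `h ∈ F_q[x]` such that `h ∘ ψ` is trivial. -/
def IsOrdChar {K L : Type*} [Field K] [Field L] [Algebra K L]
    (q : ℕ) (m : K[X]) (ψ : AddChar L ℂ) : Prop :=
  m.Monic ∧ ∀ h : K[X], (∀ x : L, ψ (circQ q h x) = 1) ↔ m ∣ h

/-- Polynomial Euler totient `Φ_q(f)`. -/
def Phi {K : Type*} [Field K] (f : K[X]) : ℕ :=
  Nat.card ((K[X] ⧸ Ideal.span {f})ˣ)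

/-! The Frobenius `φ x = x ^ q` is `F_q`-linear and `h ∘ x = h(φ) x`, so the `h` with `h ∘ ψ`
trivial form an ideal containing `X ^ n - 1`, and the `F_q`-order of `ψ` is its monic generator.
For monic `f * g = X ^ n - 1`, the linearized polynomial `f ∘ ·` has at most `q ^ deg f` roots,
the same holds for `g`, and `g ∘ ·` maps `F_{q^n}` into the kernel of `f ∘ ·`; hence that kernel
has exactly `q ^ deg f` elements, and so has the group of characters killed by `f`, the dual
of `F_{q^n}` modulo the image of `f ∘ ·`. In
`F_q[X]/(f)` the elements killed by a divisor `e` of `f` are the multiples of `f / e`, again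
`q ^ deg e` of them. Both counts are sums over the monic divisors `e ∣ f` of the number of
elements of exact order `e`, so induction on the degree shows that there are as many characters
of order `f` as elements of `F_q[X]/(f)` of order `f`, which are the units. -/

section MonicGenerator

variable {K : Type*} [Field K]

def Ideal.monicGenerator (I : Ideal K[X]) : K[X] :=
  Submodule.IsPrincipal.generator I * C (Submodule.IsPrincipal.generator I).leadingCoeff⁻¹

namespace Ideal

theorem span_monicGenerator (I : Ideal K[X]) : span {I.monicGenerator} = I := by
  set g := Submodule.IsPrincipal.generator I
  rcases eq_or_ne g 0 with hg | hg
  · rw [monicGenerator, ← span_singleton_generator I]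
    simp [g, hg]
  · rw [monicGenerator, span_singleton_mul_right_unit
      (isUnit_C.mpr (inv_ne_zero (leadingCoeff_ne_zero.mpr hg)).isUnit), span_singleton_generator]

theorem mem_iff_monicGenerator_dvd {I : Ideal K[X]} {h : K[X]} : h ∈ I ↔ I.monicGenerator ∣ h := by
  rw [← mem_span_singleton, span_monicGenerator]

theorem monic_monicGenerator {I : Ideal K[X]} (hI : I ≠ ⊥) : I.monicGenerator.Monic :=
  monic_mul_leadingCoeff_inv fun h0 => hI <| by
    rw [← span_singleton_generator I, h0, span_singleton_eq_bot]

theorem monicGenerator_eq_iff {I : Ideal K[X]} (hI : I ≠ ⊥) {m : K[X]} :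
    I.monicGenerator = m ↔ m.Monic ∧ ∀ h, h ∈ I ↔ m ∣ h := by
  refine ⟨?_, fun ⟨hm, hI_eq⟩ => ?_⟩
  · rintro rfl
    exact ⟨monic_monicGenerator hI, fun _ => mem_iff_monicGenerator_dvd⟩
  · have hspan : span {m} = span {I.monicGenerator} := by
      rw [span_monicGenerator]
      ext h
      rw [mem_span_singleton, hI_eq]
    exact eq_of_monic_of_associated (monic_monicGenerator hI) hm
      (span_singleton_eq_span_singleton.mp hspan.symm)

end Ideal

end MonicGenerator

section CountingByOrder

variable {K : Type*} [Field K] {α β : Type*} [Finite α] [Finite β]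

theorem Polynomial.Monic.natDegree_lt_of_dvd_of_ne {e d : K[X]} (he : e.Monic) (hd : d.Monic)
    (hed : e ∣ d) (hne : e ≠ d) : e.natDegree < d.natDegree :=
  (natDegree_le_of_dvd hed hd.ne_zero).lt_of_ne fun h =>
    hne (eq_of_monic_of_dvd_of_natDegree_le he hd hed h.ge).symm

theorem card_ord_dvd_eq_add_sum (ord : α → K[X]) {d : K[X]} {T : Finset K[X]}
    (hT : ∀ a, ord a ∣ d → ord a ≠ d → ord a ∈ T) (hTd : ∀ e ∈ T, e ∣ d ∧ e ≠ d) :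
    Nat.card {a // ord a ∣ d} =
      Nat.card {a // ord a = d} + ∑ e ∈ T, Nat.card {a // ord a = e} := by
  classical
  have := Fintype.ofFinite α
  have hd : d ∉ T := fun h => (hTd d h).2 rfl
  simp only [Nat.card_eq_fintype_card, Fintype.card_subtype]
  rw [← Finset.sum_insert (f := fun e => (Finset.univ.filter fun a => ord a = e).card) hd,
    Finset.card_eq_sum_card_fiberwise (f := ord) (t := insert d T)]
  · refine Finset.sum_congr rfl fun e he => ?_
    congr 1
    ext a
    simp only [Finset.mem_filter, Finset.mem_univ, true_and, and_iff_right_iff_imp]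
    rintro rfl
    rcases Finset.mem_insert.mp he with rfl | he
    · exact dvd_rfl
    · exact (hTd _ he).1
  · intro a ha
    simp only [Finset.coe_filter, Finset.mem_univ, true_and, Set.mem_ofPred_eq] at ha
    by_cases had : ord a = d
    · exact had ▸ Finset.mem_insert_self _ _
    · exact Finset.mem_insert_of_mem (hT a ha had)

theorem card_ord_eq_of_card_ord_dvd_eq (ord : α → K[X]) (ord' : β → K[X])
    (hord : ∀ a, (ord a).Monic) (hord' : ∀ b, (ord' b).Monic) {d : K[X]} (hd : d.Monic)
    (hdvd : ∀ e, e.Monic → e ∣ d → Nat.card {a // ord a ∣ e} = Nat.card {b // ord' b ∣ e}) :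
    Nat.card {a // ord a = d} = Nat.card {b // ord' b = d} := by
  classical
  have := Fintype.ofFinite α
  have := Fintype.ofFinite β
  induction hN : d.natDegree using Nat.strong_induction_on generalizing d with
  | _ N IH =>
    set S := Finset.univ.image ord ∪ Finset.univ.image ord'
    set T := (S.filter fun e => e.Monic ∧ e ∣ d).erase d
    have hT : ∀ e ∈ T, e.Monic ∧ e ∣ d ∧ e ≠ d := fun e he =>
      have h := (Finset.mem_filter.mp (Finset.mem_of_mem_erase he)).2
      ⟨h.1, h.2, Finset.ne_of_mem_erase he⟩
    have hTd : ∀ e ∈ T, e ∣ d ∧ e ≠ d := fun e he => (hT e he).2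
    have hmemT : ∀ e ∈ S, e.Monic → e ∣ d → e ≠ d → e ∈ T := fun e he hm h1 h2 =>
      Finset.mem_erase.mpr ⟨h2, Finset.mem_filter.mpr ⟨he, hm, h1⟩⟩
    have hsum : ∑ e ∈ T, Nat.card {a // ord a = e} = ∑ e ∈ T, Nat.card {b // ord' b = e} := by
      refine Finset.sum_congr rfl fun e he => ?_
      obtain ⟨he_monic, hed, hne⟩ := hT e he
      exact IH _ (hN ▸ he_monic.natDegree_lt_of_dvd_of_ne hd hed hne) he_monic
        (fun e' he' he'e => hdvd e' he' (he'e.trans hed)) rfl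
    have h := hdvd d hd dvd_rfl
    rw [card_ord_dvd_eq_add_sum ord (T := T) (fun a => hmemT _
        (Finset.mem_union_left _ (Finset.mem_image_of_mem _ (Finset.mem_univ a))) (hord a)) hTd,
      card_ord_dvd_eq_add_sum ord' (T := T) (fun b => hmemT _
        (Finset.mem_union_right _ (Finset.mem_image_of_mem _ (Finset.mem_univ b))) (hord' b)) hTd,
      hsum] at h
    omega

end CountingByOrder

theorem card_circQ_eq_zero_le {K L : Type*} [Field K] [Field L] [Algebra K L] {q : ℕ}
    (hq : 1 < q) {f : K[X]} (hf : f ≠ 0) :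
    Nat.card {x : L // circQ q f x = 0} ≤ q ^ f.natDegree := by
  classical
  set P : L[X] := ∑ i ∈ f.support, C (algebraMap K L (f.coeff i)) * X ^ q ^ i
  have heval : ∀ x, P.eval x = circQ q f x := fun x => by
    simp [P, circQ, eval_finsetSum]
  have hcoeff : P.coeff (q ^ f.natDegree) = algebraMap K L f.leadingCoeff := by
    rw [finsetSum_coeff, Finset.sum_eq_single f.natDegree]
    · simp
    · intro i _ hi
      rw [coeff_C_mul, coeff_X_pow, if_neg fun h => hi (Nat.pow_right_injective hq h.symm),
        mul_zero]
    · exact fun h => absurd (natDegree_mem_support_of_nonzero hf) h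
  have hP : P ≠ 0 := fun h0 => (_root_.map_ne_zero _).mpr (leadingCoeff_ne_zero.mpr hf) <| by
    rw [← hcoeff, h0, coeff_zero]
  have hdeg : P.natDegree ≤ q ^ f.natDegree :=
    natDegree_sum_le_of_forall_le _ _ fun i hi => (natDegree_C_mul_le _ _).trans <| by
      rw [natDegree_X_pow]
      exact Nat.pow_le_pow_right (by omega) (le_natDegree_of_mem_supp i hi)
  calc Nat.card {x : L // circQ q f x = 0} = Nat.card P.roots.toFinset :=
        Nat.card_congr <| Equiv.subtypeEquivRight fun x => by
          rw [Multiset.mem_toFinset, mem_roots hP, IsRoot, heval]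
    _ ≤ Multiset.card P.roots := by
        rw [Nat.card_eq_fintype_card, Fintype.card_coe]; exact Multiset.toFinset_card_le _
    _ ≤ q ^ f.natDegree := (card_roots' P).trans hdeg

theorem AddMonoidHom.card_ker_eq_of_comp_eq_zero {G : Type*} [AddCommGroup G] [Finite G]
    (A B : G →+ G) (hAB : ∀ x, A (B x) = 0) {a b : ℕ} (hG : Nat.card G = a * b)
    (hA : Nat.card A.ker ≤ a) (hB : Nat.card B.ker ≤ b) : Nat.card A.ker = a := by
  have hrange : Nat.card B.range ≤ Nat.card A.ker :=
    AddSubgroup.card_le_of_le fun _ ⟨x, hx⟩ => hx ▸ hAB x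
  have hBG : Nat.card B.ker * Nat.card B.range = a * b := by
    rw [← AddSubgroup.index_ker, AddSubgroup.card_mul_index, hG]
  have hb : 0 < b := Nat.pos_of_ne_zero fun h => (Nat.card_pos (α := G)).ne' (by simp [hG, h])
  have : a * b ≤ Nat.card A.ker * b :=
    calc a * b = Nat.card B.range * Nat.card B.ker := by rw [← hBG, mul_comm]
      _ ≤ Nat.card A.ker * b := Nat.mul_le_mul hrange hB
  exact le_antisymm hA (Nat.le_of_mul_le_mul_right this hb)

namespace AddChar

variable {G M : Type*} [AddCommGroup G] [CommMonoid M]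

theorem card_trivialOn_eq_card_quotient (S : AddSubgroup G) :
    Nat.card {ψ : AddChar G M // ∀ s ∈ S, ψ s = 1} = Nat.card (AddChar (G ⧸ S) M) := by
  let restrict (χ : AddChar (G ⧸ S) M) : {ψ : AddChar G M // ∀ s ∈ S, ψ s = 1} :=
    ⟨χ.compAddMonoidHom (QuotientAddGroup.mk' S), fun s hs => by
      rw [compAddMonoidHom_apply, QuotientAddGroup.mk'_apply,
        (QuotientAddGroup.eq_zero_iff s).mpr hs, map_zero_eq_one]⟩
  refine (Nat.card_eq_of_bijective restrict ⟨fun χ χ' h => ?_, ?_⟩).symm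
  · exact compAddMonoidHom_injective_left _ (QuotientAddGroup.mk'_surjective S)
      (congrArg Subtype.val h)
  · rintro ⟨ψ, hψ⟩
    have hS : S ≤ (toAddMonoidHomEquiv ψ).ker := fun s hs => by
      simp [hψ s hs]
    exact ⟨toAddMonoidHomEquiv.symm (QuotientAddGroup.lift S _ hS), rfl⟩

theorem card_trivialOn_range_mul_card_range {H : Type*} [AddCommGroup H] [Finite G]
    (T : H →+ G) :
    Nat.card {ψ : AddChar G ℂ // ∀ x, ψ (T x) = 1} * Nat.card T.range = Nat.card G := by
  have := Fintype.ofFinite G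
  have := Fintype.ofFinite (G ⧸ T.range)
  have hcongr : Nat.card {ψ : AddChar G ℂ // ∀ x, ψ (T x) = 1} =
      Nat.card {ψ : AddChar G ℂ // ∀ s ∈ T.range, ψ s = 1} :=
    Nat.card_congr <| Equiv.subtypeEquivRight fun ψ => by simp
  rw [hcongr, card_trivialOn_eq_card_quotient, Nat.card_eq_fintype_card, card_eq,
    ← Nat.card_eq_fintype_card, ← AddSubgroup.card_eq_card_quotient_mul_card_addSubgroup]

end AddChar

theorem monic_X_pow_finrank_sub_one {K L : Type*} [Field K] [Field L] [Algebra K L] [Finite L] :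
    (X ^ Module.finrank K L - 1 : K[X]).Monic := by
  simpa using monic_X_pow_sub_C (1 : K) Module.finrank_pos.ne'

section Frobenius

variable (K L : Type*) [Field K] [Fintype K] [Field L] [Algebra K L]

abbrev frobeniusEnd : Module.End K L := (FiniteField.frobeniusAlgHom K L).toLinearMap

variable {K L}

theorem frobeniusEnd_pow_apply (i : ℕ) (x : L) :
    (frobeniusEnd K L ^ i) x = x ^ Fintype.card K ^ i := by
  rw [Module.End.pow_apply]
  exact congrFun (pow_iterate _ i) x

theorem aeval_frobeniusEnd_apply (h : K[X]) (x : L) :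
    aeval (frobeniusEnd K L) h x = circQ (Fintype.card K) h x := by
  rw [aeval_endomorphism, circQ, sum_def]
  exact Finset.sum_congr rfl fun i _ => by rw [Algebra.smul_def, frobeniusEnd_pow_apply]

theorem aeval_frobeniusEnd_X_pow_finrank_sub_one [Finite L] :
    aeval (frobeniusEnd K L) (X ^ Module.finrank K L - 1 : K[X]) = 0 := by
  have := Fintype.ofFinite L
  ext x
  rw [map_sub, map_pow, aeval_X, map_one, LinearMap.sub_apply, frobeniusEnd_pow_apply,
    ← Module.card_eq_pow_finrank, FiniteField.pow_card, Module.End.one_apply, sub_self,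
    LinearMap.zero_apply]

theorem card_ker_aeval_frobeniusEnd [Finite L] {f : K[X]} (hf : f.Monic)
    (hdvd : f ∣ X ^ Module.finrank K L - 1) :
    Nat.card (aeval (frobeniusEnd K L) f).toAddMonoidHom.ker = Fintype.card K ^ f.natDegree := by
  obtain ⟨e, he⟩ := hdvd
  have he_monic : e.Monic := hf.of_mul_monic_left (he ▸ monic_X_pow_finrank_sub_one)
  have hker_le : ∀ g : K[X], g.Monic →
      Nat.card (aeval (frobeniusEnd K L) g).toAddMonoidHom.ker ≤ Fintype.card K ^ g.natDegree :=
    fun g hg => le_of_eq_of_le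
      (Nat.card_congr <| Equiv.subtypeEquivRight fun x => by
        rw [AddMonoidHom.mem_ker, LinearMap.toAddMonoidHom_coe, aeval_frobeniusEnd_apply])
      (card_circQ_eq_zero_le Fintype.one_lt_card hg.ne_zero)
  refine AddMonoidHom.card_ker_eq_of_comp_eq_zero _ (aeval (frobeniusEnd K L) e).toAddMonoidHom
    (fun x => ?_) ?_ (hker_le f hf) (hker_le e he_monic)
  · simp only [LinearMap.toAddMonoidHom_coe]
    rw [← Module.End.mul_apply, ← map_mul, ← he, aeval_frobeniusEnd_X_pow_finrank_sub_one,
      LinearMap.zero_apply]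
  · have hdeg : Module.finrank K L = f.natDegree + e.natDegree := by
      rw [← natDegree_mul hf.ne_zero he_monic.ne_zero, ← he, ← C_1, natDegree_X_pow_sub_C]
    rw [Module.natCard_eq_pow_finrank (K := K), Nat.card_eq_fintype_card, hdeg, pow_add]

end Frobenius

section CharacterOrder

variable (K : Type*) {L : Type*} [Field K] [Fintype K] [Field L] [Algebra K L]

def charOrdIdeal (ψ : AddChar L ℂ) : Ideal K[X] where
  carrier := {h | ∀ x, ψ (aeval (frobeniusEnd K L) h x) = 1}
  zero_mem' x := by simp
  add_mem' {a b} ha hb x := by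
    rw [map_add, LinearMap.add_apply, AddChar.map_add_eq_mul, ha x, hb x, one_mul]
  smul_mem' c h hh x := by
    rw [smul_eq_mul, mul_comm, map_mul, Module.End.mul_apply]
    exact hh _

def charOrd (ψ : AddChar L ℂ) : K[X] := (charOrdIdeal K ψ).monicGenerator

variable {K}

theorem mem_charOrdIdeal {ψ : AddChar L ℂ} {h : K[X]} :
    h ∈ charOrdIdeal K ψ ↔ ∀ x, ψ (circQ (Fintype.card K) h x) = 1 := by
  simp only [← aeval_frobeniusEnd_apply]
  rfl

variable [Finite L]

theorem X_pow_finrank_sub_one_mem_charOrdIdeal (ψ : AddChar L ℂ) :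
    (X ^ Module.finrank K L - 1 : K[X]) ∈ charOrdIdeal K ψ := fun x => by
  rw [aeval_frobeniusEnd_X_pow_finrank_sub_one, LinearMap.zero_apply, AddChar.map_zero_eq_one]

theorem charOrdIdeal_ne_bot (ψ : AddChar L ℂ) : charOrdIdeal K ψ ≠ ⊥ := fun h => by
  have hmem := X_pow_finrank_sub_one_mem_charOrdIdeal (K := K) ψ
  rw [h, Ideal.mem_bot] at hmem
  exact monic_X_pow_finrank_sub_one.ne_zero hmem

theorem charOrd_monic (ψ : AddChar L ℂ) : (charOrd K ψ).Monic :=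
  Ideal.monic_monicGenerator (charOrdIdeal_ne_bot ψ)

theorem isOrdChar_iff_charOrd_eq {m : K[X]} {ψ : AddChar L ℂ} :
    IsOrdChar (Fintype.card K) m ψ ↔ charOrd K ψ = m := by
  simp only [charOrd, Ideal.monicGenerator_eq_iff (charOrdIdeal_ne_bot ψ), mem_charOrdIdeal]
  rfl

theorem card_charOrd_dvd {f : K[X]} (hf : f.Monic) (hdvd : f ∣ X ^ Module.finrank K L - 1) :
    Nat.card {ψ : AddChar L ℂ // charOrd K ψ ∣ f} = Fintype.card K ^ f.natDegree := by
  set T := (aeval (frobeniusEnd K L) f).toAddMonoidHom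
  have hcongr : Nat.card {ψ : AddChar L ℂ // charOrd K ψ ∣ f} =
      Nat.card {ψ : AddChar L ℂ // ∀ x, ψ (T x) = 1} :=
    Nat.card_congr <| Equiv.subtypeEquivRight fun ψ => by
      rw [charOrd, ← Ideal.mem_iff_monicGenerator_dvd]
      rfl
  have hchar := AddChar.card_trivialOn_range_mul_card_range T
  have hker := T.ker.card_mul_index
  rw [AddSubgroup.index_ker] at hker
  rw [hcongr, ← card_ker_aeval_frobeniusEnd hf hdvd]
  exact Nat.eq_of_mul_eq_mul_right Nat.card_pos (hchar.trans hker.symm)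

end CharacterOrder

section QuotientOrder

variable {K : Type*} [Field K]

theorem natCard_quotient_span_singleton {f : K[X]} (hf : f.Monic) :
    Nat.card (K[X] ⧸ Ideal.span {f}) = Nat.card K ^ f.natDegree := by
  have := (AdjoinRoot.powerBasis' hf).finite
  show Nat.card (AdjoinRoot f) = _
  rw [Module.natCard_eq_pow_finrank (K := K), (AdjoinRoot.powerBasis' hf).finrank,
    AdjoinRoot.powerBasis'_dim]

theorem finite_quotient_span_singleton [Finite K] {f : K[X]} (hf : f.Monic) :
    Finite (K[X] ⧸ Ideal.span {f}) :=
  Nat.finite_of_card_ne_zero <| by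
    rw [natCard_quotient_span_singleton hf]; exact pow_ne_zero _ Nat.card_pos.ne'

theorem mem_torsionOf_quotient {f h : K[X]} {x : K[X] ⧸ Ideal.span {f}} :
    h ∈ Ideal.torsionOf K[X] _ x ↔ Ideal.Quotient.mk _ h * x = 0 := by
  rw [Ideal.mem_torsionOf_iff]
  rfl

def quotOrd (f : K[X]) (x : K[X] ⧸ Ideal.span {f}) : K[X] :=
  (Ideal.torsionOf K[X] _ x).monicGenerator

theorem torsionOf_quotient_ne_bot {f : K[X]} (hf : f ≠ 0) (x : K[X] ⧸ Ideal.span {f}) :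
    Ideal.torsionOf K[X] _ x ≠ ⊥ := fun h => by
  have hmem : f ∈ Ideal.torsionOf K[X] _ x := by
    rw [mem_torsionOf_quotient, (Ideal.Quotient.eq_zero_iff_dvd _ _).mpr dvd_rfl, zero_mul]
  rw [h, Ideal.mem_bot] at hmem
  exact hf hmem

theorem quotOrd_monic {f : K[X]} (hf : f ≠ 0) (x : K[X] ⧸ Ideal.span {f}) :
    (quotOrd f x).Monic :=
  Ideal.monic_monicGenerator (torsionOf_quotient_ne_bot hf x)

theorem quotOrd_dvd_iff {f e : K[X]} {x : K[X] ⧸ Ideal.span {f}} :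
    quotOrd f x ∣ e ↔ Ideal.Quotient.mk _ e * x = 0 := by
  rw [quotOrd, ← Ideal.mem_iff_monicGenerator_dvd, mem_torsionOf_quotient]

theorem quotOrd_eq_self_iff [Finite K] {f : K[X]} (hf : f.Monic) {x : K[X] ⧸ Ideal.span {f}} :
    quotOrd f x = f ↔ IsUnit x := by
  rw [quotOrd, Ideal.monicGenerator_eq_iff (torsionOf_quotient_ne_bot hf.ne_zero x)]
  simp only [mem_torsionOf_quotient, hf, true_and]
  refine ⟨fun h => ?_, fun hx h => by rw [hx.mul_left_eq_zero, Ideal.Quotient.eq_zero_iff_dvd]⟩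
  have := finite_quotient_span_singleton hf
  refine (isRightRegular_iff_left_eq_zero_of_mul.mpr fun y hy => ?_).isUnit_of_finite
  obtain ⟨t, rfl⟩ := Ideal.Quotient.mk_surjective y
  exact (Ideal.Quotient.eq_zero_iff_dvd _ _).mpr ((h t).mp hy)

theorem card_quotOrd_dvd {f e : K[X]} (hf : f ≠ 0) (he : e.Monic) (hef : e ∣ f) :
    Nat.card {x : K[X] ⧸ Ideal.span {f} // quotOrd f x ∣ e} = Nat.card K ^ e.natDegree := by
  obtain ⟨c, rfl⟩ := hef
  have hc : c ≠ 0 := right_ne_zero_of_mul hf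
  set μ := (Ideal.span {e * c}).mkQ ∘ₗ LinearMap.mulLeft K[X] c
  have hker : LinearMap.ker μ = Ideal.span {e} := by
    ext t
    rw [LinearMap.mem_ker, Ideal.mem_span_singleton, LinearMap.comp_apply, Submodule.mkQ_apply,
      Submodule.Quotient.mk_eq_zero, LinearMap.mulLeft_apply, Ideal.mem_span_singleton, mul_comm e,
      mul_dvd_mul_iff_left hc]
  have hrange : ∀ x, x ∈ LinearMap.range μ ↔ Ideal.Quotient.mk _ e * x = 0 := fun x => by
    obtain ⟨s, rfl⟩ := Ideal.Quotient.mk_surjective x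
    rw [← map_mul, Ideal.Quotient.eq_zero_iff_dvd, mul_dvd_mul_iff_left he.ne_zero]
    constructor
    · rintro ⟨t, ht⟩
      have hts : e * c ∣ c * t - s := Ideal.mem_span_singleton.mp (Ideal.Quotient.eq.mp ht)
      exact (dvd_sub_right (dvd_mul_right c t)).mp (dvd_of_mul_left_dvd hts)
    · rintro ⟨t, rfl⟩
      exact ⟨t, rfl⟩
  calc Nat.card {x : K[X] ⧸ Ideal.span {e * c} // quotOrd (e * c) x ∣ e}
      = Nat.card (LinearMap.range μ) :=
        Nat.card_congr <| Equiv.subtypeEquivRight fun x => by rw [quotOrd_dvd_iff, hrange]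
    _ = Nat.card (K[X] ⧸ Ideal.span {e}) := by
        rw [← hker]; exact (Nat.card_congr μ.quotKerEquivRange.toEquiv).symm
    _ = Nat.card K ^ e.natDegree := natCard_quotient_span_singleton he

end QuotientOrder

theorem stmt_11_general (q n : ℕ) (hn : 1 ≤ n)
    (K L : Type*) [Field K] [Fintype K] [Field L] [Algebra K L]
    (hcard : Fintype.card K = q) (hrank : Module.finrank K L = n) :
    (∀ (ψ : AddChar L ℂ) (m : K[X]), IsOrdChar q m ψ → m.Monic ∧ m ∣ X ^ n - 1) ∧
      ∀ f : K[X], f.Monic → f ∣ X ^ n - 1 →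
        Nat.card {ψ : AddChar L ℂ // IsOrdChar q f ψ} = Phi f := by
  subst hcard hrank
  have : Module.Finite K L := Module.finite_of_finrank_pos hn
  have : Finite L := Module.finite_of_finite K
  refine ⟨fun ψ m hm => ⟨hm.1, ?_⟩, fun f hf hdvd => ?_⟩
  · exact (hm.2 _).mp (mem_charOrdIdeal.mp (X_pow_finrank_sub_one_mem_charOrdIdeal ψ))
  have := finite_quotient_span_singleton hf
  calc Nat.card {ψ : AddChar L ℂ // IsOrdChar (Fintype.card K) f ψ}
      = Nat.card {ψ : AddChar L ℂ // charOrd K ψ = f} :=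
        Nat.card_congr <| Equiv.subtypeEquivRight fun _ => isOrdChar_iff_charOrd_eq
    _ = Nat.card {x : K[X] ⧸ Ideal.span {f} // quotOrd f x = f} :=
        card_ord_eq_of_card_ord_dvd_eq _ _ charOrd_monic (quotOrd_monic hf.ne_zero) hf
          fun e he hef => by
            rw [card_charOrd_dvd he (hef.trans hdvd), card_quotOrd_dvd hf.ne_zero he hef,
              Nat.card_eq_fintype_card]
    _ = Nat.card {x : K[X] ⧸ Ideal.span {f} // IsUnit x} :=
        Nat.card_congr <| Equiv.subtypeEquivRight fun _ => quotOrd_eq_self_iff hf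
    _ = Phi f := (Nat.card_congr Submonoid.unitsTypeEquivIsUnitSubmonoid.toEquiv).symm

theorem stmt_11 (p q n : ℕ) (hp : p.Prime) (hq : ∃ k : ℕ, 0 < k ∧ q = p ^ k) (hn : 1 ≤ n)
    (K L : Type*) [Field K] [Fintype K] [Field L] [Algebra K L]
    (hcard : Fintype.card K = q) (hrank : Module.finrank K L = n) :
    (∀ (ψ : AddChar L ℂ) (m : K[X]), IsOrdChar q m ψ → m.Monic ∧ m ∣ X ^ n - 1) ∧
      ∀ f : K[X], f.Monic → f ∣ X ^ n - 1 →
        Nat.card {ψ : AddChar L ℂ // IsOrdChar q f ψ} = Phi f :=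
  stmt_11_general q n hn K L hcard hrank
end
end

section
/- Let p be a prime, n ≥ 1, q = p^n, and let f(x) = a·x + b ∈ F_p[x] with a ≠ 0. If b = 0 or n ≡ 0 (mod p), then there is no pair (x_0, y_0) ∈ F_q × F_q with y_0^p − y_0 = f(x_0) such that both x_0 and y_0 are normal over F_p. -/
open Polynomial

noncomputable section

/-- `β` is a normal element over `K`: `{β, β^q, …, β^{q^{n-1}}}` is a `K`-basis of `L`. -/
def IsNormalElem (K : Type*) {L : Type*} [Field K] [Field L] [Algebra K L]
    (q n : ℕ) (β : L) : Prop :=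
  ∃ B : Module.Basis (Fin n) K L, ∀ i : Fin n, B i = β ^ q ^ (i : ℕ)

/-!
Apply the absolute trace `Tr(z) = ∑_{i<n} z^{p^i}` to `y₀^p - y₀ = a x₀ + b`. The left side
telescopes to `y₀^{p^n} - y₀ = 0`; the right side is `a Tr(x₀) + n b = a Tr(x₀)` under either
hypothesis on `b`. But the trace of a normal element is the sum of the vectors of a basis,
hence nonzero.
-/

theorem IsNormalElem.sum_pow_ne_zero {K L : Type*} [Field K] [Field L] [Algebra K L]
    {q n : ℕ} {β : L} (hβ : IsNormalElem K q n β) (hn : 1 ≤ n) :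
    ∑ i : Fin n, β ^ q ^ (i : ℕ) ≠ 0 := by
  obtain ⟨B, hB⟩ := hβ
  intro h
  have hcomb : ∑ i : Fin n, (1 : K) • B i = 0 := by simpa [hB] using h
  exact one_ne_zero <|
    Fintype.linearIndependent_iff.mp B.linearIndependent (fun _ => 1) hcomb ⟨0, hn⟩

theorem sum_range_sub_pow_char_pow {R : Type*} [CommRing R] (p : ℕ) [Fact p.Prime] [CharP R p]
    (y : R) (n : ℕ) :
    ∑ i ∈ Finset.range n, (y ^ p - y) ^ p ^ i = y ^ p ^ n - y := by
  have hstep (i : ℕ) : (y ^ p - y) ^ p ^ i = y ^ p ^ (i + 1) - y ^ p ^ i := by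
    rw [sub_pow_char_pow, ← pow_mul, pow_succ']
  simp_rw [hstep]
  rw [Finset.sum_range_sub (fun i => y ^ p ^ i), pow_zero, pow_one]

theorem sum_pow_char_pow_affine {L : Type*} [Field L] (p : ℕ) [Fact p.Prime] [Algebra (ZMod p) L]
    (a b : ZMod p) (x : L) (n : ℕ) :
    ∑ i : Fin n, (algebraMap (ZMod p) L a * x + algebraMap (ZMod p) L b) ^ p ^ (i : ℕ) =
      algebraMap (ZMod p) L a * ∑ i : Fin n, x ^ p ^ (i : ℕ) + algebraMap (ZMod p) L (n * b) := by
  have : CharP L p := charP_of_injective_algebraMap (algebraMap (ZMod p) L).injective p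
  have hterm (i : ℕ) : (algebraMap (ZMod p) L a * x + algebraMap (ZMod p) L b) ^ p ^ i =
      algebraMap (ZMod p) L a * x ^ p ^ i + algebraMap (ZMod p) L b := by
    rw [add_pow_char_pow, mul_pow, ← map_pow, ← map_pow, ZMod.pow_card_pow, ZMod.pow_card_pow]
  simp only [hterm, Finset.sum_add_distrib, ← Finset.mul_sum, Finset.sum_const, Finset.card_univ,
    Fintype.card_fin, nsmul_eq_mul, map_mul, map_natCast]

theorem stmt_14_general (p n : ℕ) [Fact p.Prime] (hn : 1 ≤ n)
    (L : Type*) [Field L] [Algebra (ZMod p) L]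
    (a b : ZMod p) (ha : a ≠ 0) (hb : b = 0 ∨ p ∣ n) :
    ¬ ∃ x₀ y₀ : L,
        y₀ ^ p - y₀ = algebraMap (ZMod p) L a * x₀ + algebraMap (ZMod p) L b ∧
        IsNormalElem (ZMod p) p n x₀ ∧ IsNormalElem (ZMod p) p n y₀ := by
  rintro ⟨x₀, y₀, heq, hx₀, -⟩
  have : CharP L p := charP_of_injective_algebraMap (algebraMap (ZMod p) L).injective p
  obtain ⟨B, -⟩ := id hx₀
  have : Fintype L := Module.fintypeOfFintype B
  have hcard : Fintype.card L = p ^ n := by rw [Module.card_fintype B, ZMod.card, Fintype.card_fin]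
  have hnb : (n : ZMod p) * b = 0 := by
    rcases hb with rfl | hpn
    · exact mul_zero _
    · rw [(ZMod.natCast_eq_zero_iff n p).mpr hpn, zero_mul]
  have htrace : algebraMap (ZMod p) L a * ∑ i : Fin n, x₀ ^ p ^ (i : ℕ) = 0 :=
    calc algebraMap (ZMod p) L a * ∑ i : Fin n, x₀ ^ p ^ (i : ℕ)
        = algebraMap (ZMod p) L a * ∑ i : Fin n, x₀ ^ p ^ (i : ℕ)
            + algebraMap (ZMod p) L (n * b) := by rw [hnb, map_zero, add_zero]
      _ = ∑ i : Fin n, (y₀ ^ p - y₀) ^ p ^ (i : ℕ) := by rw [heq, sum_pow_char_pow_affine]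
      _ = y₀ ^ p ^ n - y₀ := by
        rw [Fin.sum_univ_eq_sum_range (fun i => (y₀ ^ p - y₀) ^ p ^ i), sum_range_sub_pow_char_pow]
      _ = 0 := by rw [← hcard, FiniteField.pow_card, sub_self]
  rcases mul_eq_zero.mp htrace with h | h
  · exact ha ((map_eq_zero_iff _ (algebraMap (ZMod p) L).injective).mp h)
  · exact hx₀.sum_pow_ne_zero hn h

theorem stmt_14 (p n : ℕ) [Fact p.Prime] (hn : 1 ≤ n)
    (L : Type*) [Field L] [Algebra (ZMod p) L]
    (hrank : Module.finrank (ZMod p) L = n)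
    (a b : ZMod p) (ha : a ≠ 0) (hb : b = 0 ∨ p ∣ n) :
    ¬ ∃ x₀ y₀ : L,
        y₀ ^ p - y₀ = algebraMap (ZMod p) L a * x₀ + algebraMap (ZMod p) L b ∧
        IsNormalElem (ZMod p) p n x₀ ∧ IsNormalElem (ZMod p) p n y₀ :=
  stmt_14_general p n hn L a b ha hb
end
end

section
/- Let p be a prime and n ≥ 1 with n not divisible by p, and set q = p^n. Then for every α ∈ F_q that is normal over F_p, there exist b ∈ F_p with b ≠ 0 and y_0 ∈ F_q normal over F_p such that y_0^p − y_0 = α + b; that is, the curve y^p − y = x + b contains the F_q-normal point (α, y_0). -/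
open Polynomial

noncomputable section

/-!
Adding `b ∈ K` to `α` shifts its trace by `[L:K] • b`; since `[L:K] ≠ 0` in `K` and a normal
element has nonzero trace, a suitable `b ≠ 0` makes the trace of `α + b` vanish. By the additive
Hilbert 90 (the kernel of the trace is the image of `y ↦ y ^ q - y`), `α + b = y ^ q - y` for
some `y`, unique up to adding elements of `K`, which shift the trace of `y` by multiples of `[L:K]`;
so we may take `Tr y ≠ 0`. Then `y` is normal: taking traces of a relation `∑ gᵢ y^(qⁱ) = 0`
gives `∑ gᵢ = 0`, and applying `y ↦ y ^ q - y` to it then gives `∑ gᵢ α^(qⁱ) = 0`.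
-/

open Module Algebra FiniteField

namespace IsNormalElem

variable {K L : Type*} [Field K] [Field L] [Algebra K L] {q n : ℕ} {β : L}

theorem finrank_eq (h : IsNormalElem K q n β) : finrank K L = n := by
  obtain ⟨B, -⟩ := h
  rw [finrank_eq_card_basis B, Fintype.card_fin]

theorem linearIndependent (h : IsNormalElem K q n β) :
    LinearIndependent K fun i : Fin n ↦ β ^ q ^ (i : ℕ) := by
  obtain ⟨B, hB⟩ := h
  simpa only [← hB] using B.linearIndependent

end IsNormalElem

theorem isNormalElem_of_linearIndependent {K L : Type*} [Field K] [Field L] [Algebra K L]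
    [FiniteDimensional K L] {q n : ℕ} {β : L} (hn : finrank K L = n)
    (h : LinearIndependent K fun i : Fin n ↦ β ^ q ^ (i : ℕ)) : IsNormalElem K q n β := by
  have : Nonempty (Fin n) := ⟨⟨0, hn ▸ finrank_pos⟩⟩
  exact ⟨basisOfLinearIndependentOfCardEqFinrank h (by rw [Fintype.card_fin, hn]),
    fun i ↦ by rw [coe_basisOfLinearIndependentOfCardEqFinrank]⟩

section

variable {K L : Type*} [Field K] [Fintype K] [Field L] [Finite L] [Algebra K L]

theorem frobeniusAlgEquivOfAlgebraic_pow_apply (i : ℕ) (x : L) :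
    (frobeniusAlgEquivOfAlgebraic K L ^ i) x = x ^ Fintype.card K ^ i := by
  rw [AlgEquiv.coe_pow, coe_frobeniusAlgEquivOfAlgebraic_iterate]

theorem trace_pow_card_pow (x : L) (i : ℕ) :
    trace K L (x ^ Fintype.card K ^ i) = trace K L x := by
  rw [← frobeniusAlgEquivOfAlgebraic_pow_apply, trace_eq_of_algEquiv]

theorem pow_card_eq_self_iff_mem_range {x : L} :
    x ^ Fintype.card K = x ↔ x ∈ Set.range (algebraMap K L) := by
  constructor
  · intro hx
    rw [← IntermediateField.mem_bot, IsGalois.mem_bot_iff_fixed]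
    intro f
    obtain ⟨i, rfl⟩ := (bijective_frobeniusAlgEquivOfAlgebraic_pow K L).2 f
    rw [frobeniusAlgEquivOfAlgebraic_pow_apply]
    induction (i : ℕ) with
    | zero => simp
    | succ k ih => rw [pow_succ, pow_mul, ih, hx]
  · rintro ⟨c, rfl⟩
    rw [← map_pow, FiniteField.pow_card]

variable (K L) in
def artinSchreier : L →ₗ[K] L :=
  (frobeniusAlgEquivOfAlgebraic K L).toLinearMap - LinearMap.id

@[simp]
theorem artinSchreier_apply (x : L) : artinSchreier K L x = x ^ Fintype.card K - x := rfl

theorem artinSchreier_algebraMap (c : K) : artinSchreier K L (algebraMap K L c) = 0 := by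
  rw [artinSchreier_apply, sub_eq_zero, pow_card_eq_self_iff_mem_range]
  exact ⟨c, rfl⟩

theorem range_artinSchreier : LinearMap.range (artinSchreier K L) = LinearMap.ker (trace K L) := by
  have hle : LinearMap.range (artinSchreier K L) ≤ LinearMap.ker (trace K L) := by
    rintro _ ⟨x, rfl⟩
    simpa [sub_eq_zero] using trace_pow_card_pow (K := K) x 1
  have hker : LinearMap.ker (artinSchreier K L) ≤ LinearMap.range (Algebra.linearMap K L) := by
    intro x hx
    simpa [sub_eq_zero, pow_card_eq_self_iff_mem_range] using hx
  have h1 := LinearMap.finrank_range_add_finrank_ker (artinSchreier K L)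
  have h2 := LinearMap.finrank_range_add_finrank_ker (trace K L)
  have h3 := (Submodule.finrank_mono hker).trans (LinearMap.finrank_range_le (Algebra.linearMap K L))
  rw [LinearMap.range_eq_top.2 (trace_surjective K L), finrank_top, finrank_self] at h2
  rw [finrank_self] at h3
  exact Submodule.eq_of_le_of_finrank_le hle (by omega)

theorem exists_pow_card_sub_self_eq_and_trace_eq {z : L} (hz : trace K L z = 0)
    (hn : (finrank K L : K) ≠ 0) (t : K) :
    ∃ y : L, y ^ Fintype.card K - y = z ∧ trace K L y = t := by
  obtain ⟨y, hy⟩ : z ∈ LinearMap.range (artinSchreier K L) := by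
    rwa [range_artinSchreier, LinearMap.mem_ker]
  refine ⟨y + algebraMap K L ((t - trace K L y) / finrank K L), ?_, ?_⟩
  · rw [← artinSchreier_apply, map_add, artinSchreier_algebraMap, add_zero, hy]
  · rw [map_add, trace_algebraMap, nsmul_eq_mul, mul_div_cancel₀ _ hn, add_sub_cancel]

theorem IsNormalElem.trace_ne_zero {n : ℕ} {α : L} (hα : IsNormalElem K (Fintype.card K) n α) :
    trace K L α ≠ 0 := by
  intro h
  have hsum : ∑ i : Fin n, (1 : K) • α ^ Fintype.card K ^ (i : ℕ) = 0 := by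
    have := algebraMap_trace_eq_sum_pow K L α
    rw [h, map_zero, hα.finrank_eq, Nat.card_eq_fintype_card, ← Fin.sum_univ_eq_sum_range] at this
    simpa using this.symm
  have hn : 0 < n := hα.finrank_eq ▸ finrank_pos
  exact one_ne_zero (Fintype.linearIndependent_iff.1 hα.linearIndependent _ hsum ⟨0, hn⟩)

theorem isNormalElem_of_pow_card_sub_self_eq {n : ℕ} {α y : L} {b : K}
    (hα : IsNormalElem K (Fintype.card K) n α) (hy : y ^ Fintype.card K - y = α + algebraMap K L b)
    (hy_tr : trace K L y ≠ 0) : IsNormalElem K (Fintype.card K) n y := by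
  refine isNormalElem_of_linearIndependent hα.finrank_eq (Fintype.linearIndependent_iff.2 ?_)
  intro g hg
  have hg_sum : ∑ i, g i = 0 := by
    have := congrArg (trace K L) hg
    simp only [map_sum, map_smul, trace_pow_card_pow, map_zero, smul_eq_mul, ← Finset.sum_mul] at this
    exact (mul_eq_zero.1 this).resolve_right hy_tr
  have hAS (i : ℕ) : artinSchreier K L (y ^ Fintype.card K ^ i) =
      α ^ Fintype.card K ^ i + algebraMap K L b := by
    rw [← frobeniusAlgEquivOfAlgebraic_pow_apply, artinSchreier_apply, ← map_pow, ← map_sub,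
      hy, map_add, AlgEquiv.commutes, frobeniusAlgEquivOfAlgebraic_pow_apply]
  have := congrArg (artinSchreier K L) hg
  simp only [map_sum, map_smul, hAS, smul_add, Finset.sum_add_distrib, ← Finset.sum_smul, hg_sum,
    zero_smul, add_zero, map_zero] at this
  exact Fintype.linearIndependent_iff.1 hα.linearIndependent g this

theorem exists_isNormalElem_pow_card_sub_self_eq_add {n : ℕ} {α : L}
    (hα : IsNormalElem K (Fintype.card K) n α) (hn : (n : K) ≠ 0) :
    ∃ b : K, b ≠ 0 ∧ ∃ y : L, IsNormalElem K (Fintype.card K) n y ∧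
      y ^ Fintype.card K - y = α + algebraMap K L b := by
  rw [← hα.finrank_eq] at hn
  set b := -trace K L α / finrank K L
  have hb : b ≠ 0 := div_ne_zero (neg_ne_zero.2 hα.trace_ne_zero) hn
  have htr : trace K L (α + algebraMap K L b) = 0 := by
    rw [map_add, trace_algebraMap, nsmul_eq_mul, mul_div_cancel₀ _ hn, add_neg_cancel]
  obtain ⟨y, hy, hy_tr⟩ := exists_pow_card_sub_self_eq_and_trace_eq htr hn 1
  exact ⟨b, hb, y, isNormalElem_of_pow_card_sub_self_eq hα hy (hy_tr ▸ one_ne_zero), hy⟩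

end

theorem stmt_15_general (p n : ℕ) [Fact p.Prime] (hpn : ¬ p ∣ n)
    (L : Type*) [Field L] [Algebra (ZMod p) L]
    (α : L) (hα : IsNormalElem (ZMod p) p n α) :
    ∃ b : ZMod p, b ≠ 0 ∧ ∃ y₀ : L, IsNormalElem (ZMod p) p n y₀ ∧
      y₀ ^ p - y₀ = α + algebraMap (ZMod p) L b := by
  obtain ⟨B, -⟩ := id hα
  have : Module.Finite (ZMod p) L := .of_basis B
  have : Finite L := Module.finite_of_finite (ZMod p)
  simpa only [ZMod.card] using exists_isNormalElem_pow_card_sub_self_eq_add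
    (by rwa [ZMod.card]) ((ZMod.natCast_eq_zero_iff n p).not.2 hpn)

theorem stmt_15 (p n : ℕ) [Fact p.Prime] (hn : 1 ≤ n) (hpn : ¬ p ∣ n)
    (L : Type*) [Field L] [Algebra (ZMod p) L]
    (hrank : Module.finrank (ZMod p) L = n)
    (α : L) (hα : IsNormalElem (ZMod p) p n α) :
    ∃ b : ZMod p, b ≠ 0 ∧ ∃ y₀ : L, IsNormalElem (ZMod p) p n y₀ ∧
      y₀ ^ p - y₀ = α + algebraMap (ZMod p) L b :=
  stmt_15_general p n hpn L α hα
end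
end

section
/- Let p be a prime, n ≥ 1 with n not divisible by p, and q = p^n. Let γ ∈ F_q have F_p-order equal to (x^n − 1)/(x − 1), and let β ∈ F_q satisfy β^p − β = γ. Then for every t ∈ F_p, the F_p-order of β + t is either x^n − 1 or (x^n − 1)/(x − 1), and β + t is normal over F_p if and only if Tr_{F_q/F_p}(β + t) ≠ 0; in particular, there exists t_0 ∈ F_p such that β + t_0 is normal over F_p. -/
open Polynomial

noncomputable section

/-- `m` is the `F_p`-order of `α`: the monic generator of `{h : h ∘ α = 0}`. -/
def IsOrd {K L : Type*} [Field K] [Field L] [Algebra K L] (q : ℕ) (m : K[X]) (α : L) : Prop :=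
  m.Monic ∧ ∀ h : K[X], circQ q h α = 0 ↔ m ∣ h

/-! The Frobenius `φ : x ↦ x ^ q` is `K`-linear, so `h ∘ α = h(φ) α` makes `L` a `K[X]`-module in
which `X ^ n - 1` kills everything. As `(X - 1) ∘ α = γ` has order `g = 1 + X + ⋯ + X ^ (n - 1)`,
every polynomial killing `α` is a multiple of `g`. If `δ = g ∘ α = Tr α` vanishes, the order of `α`
is `g`. Otherwise `δ ∈ K`, so `(g k) ∘ α = k(1) δ` vanishes exactly when `X - 1 ∣ k`, and the order
is `X ^ n - 1`; no nonzero polynomial of degree `< n` kills `α`, which is normality. -/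

open FiniteField

lemma circQ_of_pow_eq_self {K L : Type*} [Field K] [Field L] [Algebra K L] {q : ℕ} {δ : L}
    (hδ : δ ^ q = δ) (f : K[X]) : circQ q f δ = algebraMap K L (f.eval 1) * δ := by
  have hpow (i : ℕ) : δ ^ q ^ i = δ := by
    induction i with
    | zero => simp
    | succ i ih => rw [pow_succ, pow_mul, ih, hδ]
  rw [circQ, eval_eq_sum, Polynomial.sum_def, map_sum, Finset.sum_mul]
  exact Finset.sum_congr rfl fun i _ => by rw [hpow, one_pow, mul_one]

section Frobenius

variable {K L : Type*} [Field K] [Fintype K] [Field L] [Algebra K L] {q : ℕ}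

lemma frobeniusAlgHom_toLinearMap_pow_apply (i : ℕ) (x : L) :
    ((frobeniusAlgHom K L).toLinearMap ^ i) x = x ^ Fintype.card K ^ i := by
  rw [Module.End.pow_apply, AlgHom.coe_toLinearMap, coe_frobeniusAlgHom, pow_iterate]

lemma circQ_eq_aeval (hq : Fintype.card K = q) (f : K[X]) (α : L) :
    circQ q f α = aeval (frobeniusAlgHom K L).toLinearMap f α := by
  rw [circQ, aeval_def, eval₂_eq_sum, Polynomial.sum_def, LinearMap.sum_apply]
  refine Finset.sum_congr rfl fun i _ => ?_
  rw [Module.End.mul_apply, Module.algebraMap_end_apply, frobeniusAlgHom_toLinearMap_pow_apply,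
    hq, Algebra.smul_def]

lemma circQ_mul (hq : Fintype.card K = q) (f g : K[X]) (α : L) :
    circQ q (f * g) α = circQ q f (circQ q g α) := by
  simp only [circQ_eq_aeval hq, map_mul, Module.End.mul_apply]

lemma circQ_comm (hq : Fintype.card K = q) (f g : K[X]) (α : L) :
    circQ q f (circQ q g α) = circQ q g (circQ q f α) := by
  rw [← circQ_mul hq, mul_comm, circQ_mul hq]

lemma circQ_zero_right (hq : Fintype.card K = q) (f : K[X]) : circQ q f (0 : L) = 0 := by
  rw [circQ_eq_aeval hq, map_zero]

lemma circQ_add_right (hq : Fintype.card K = q) (f : K[X]) (α β : L) :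
    circQ q f (α + β) = circQ q f α + circQ q f β := by
  simp only [circQ_eq_aeval hq, map_add]

lemma circQ_X_pow_sub_one (hq : Fintype.card K = q) (n : ℕ) (α : L) :
    circQ q (X ^ n - 1 : K[X]) α = α ^ q ^ n - α := by
  rw [circQ_eq_aeval hq, map_sub, map_one, map_pow, aeval_X, LinearMap.sub_apply,
    frobeniusAlgHom_toLinearMap_pow_apply, hq, Module.End.one_apply]

lemma circQ_sum_C_mul_X_pow (hq : Fintype.card K = q) {ι : Type*} (s : Finset ι) (c : ι → K)
    (e : ι → ℕ) (α : L) :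
    circQ q (∑ i ∈ s, C (c i) * X ^ e i) α = ∑ i ∈ s, c i • α ^ q ^ e i := by
  rw [circQ_eq_aeval hq, map_sum, LinearMap.sum_apply]
  refine Finset.sum_congr rfl fun i _ => ?_
  rw [map_mul, map_pow, aeval_X, aeval_C, Module.End.mul_apply, Module.algebraMap_end_apply,
    frobeniusAlgHom_toLinearMap_pow_apply, hq]

lemma circQ_geom_sum (hq : Fintype.card K = q) (n : ℕ) (α : L) :
    circQ q (∑ i ∈ Finset.range n, X ^ i : K[X]) α = ∑ i ∈ Finset.range n, α ^ q ^ i := by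
  simpa using circQ_sum_C_mul_X_pow hq (Finset.range n) (fun _ => (1 : K)) id α

lemma circQ_X_sub_one (hq : Fintype.card K = q) (α : L) : circQ q (X - 1 : K[X]) α = α ^ q - α := by
  simpa using circQ_X_pow_sub_one hq 1 α

lemma circQ_add_algebraMap (hq : Fintype.card K = q) (f : K[X]) (α : L) (t : K) :
    circQ q f (α + algebraMap K L t) = circQ q f α + algebraMap K L (f.eval 1 * t) := by
  have ht : algebraMap K L t ^ q = algebraMap K L t := by
    rw [← map_pow, ← hq, FiniteField.pow_card]
  rw [circQ_add_right hq, circQ_of_pow_eq_self ht, map_mul]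

end Frobenius

lemma X_pow_sub_one_div_X_sub_one {K : Type*} [Field K] (n : ℕ) :
    ((X ^ n - 1) / (X - 1) : K[X]) = ∑ i ∈ Finset.range n, X ^ i := by
  rw [← geom_sum_mul X n, mul_div_cancel_right₀ _ (by simpa using X_sub_C_ne_zero (1 : K))]

lemma IsNormalElem.geom_sum_ne_zero {K L : Type*} [Field K] [Field L] [Algebra K L] {q n : ℕ}
    {α : L} (hn : 0 < n) (h : IsNormalElem K q n α) : ∑ i ∈ Finset.range n, α ^ q ^ i ≠ 0 := by
  obtain ⟨B, hB⟩ := h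
  intro hsum
  refine one_ne_zero (Fintype.linearIndependent_iff.1 B.linearIndependent (fun _ => 1) ?_ ⟨0, hn⟩)
  simpa [hB, Fin.sum_univ_eq_sum_range (fun i => α ^ q ^ i)] using hsum

section Order

variable {K L : Type*} [Field K] [Fintype K] [Field L] [Algebra K L] {q : ℕ} {m : K[X]} {α : L}

lemma dvd_of_isOrd_circQ_X_sub_one (hq : Fintype.card K = q)
    (hγ : IsOrd q m (circQ q (X - 1 : K[X]) α)) {h : K[X]} (hh : circQ q h α = 0) : m ∣ h :=
  (hγ.2 h).1 (by rw [circQ_comm hq, hh, circQ_zero_right hq])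

lemma isOrd_of_isOrd_circQ_X_sub_one (hq : Fintype.card K = q)
    (hγ : IsOrd q m (circQ q (X - 1 : K[X]) α)) (hm : circQ q m α = 0) : IsOrd q m α := by
  refine ⟨hγ.1, fun h => ⟨dvd_of_isOrd_circQ_X_sub_one hq hγ, ?_⟩⟩
  rintro ⟨k, rfl⟩
  rw [mul_comm, circQ_mul hq, hm, circQ_zero_right hq]

variable [Module.Finite K L] {n : ℕ}

lemma circQ_X_pow_finrank_sub_one (hq : Fintype.card K = q) (hn : Module.finrank K L = n)
    (x : L) : circQ q (X ^ n - 1 : K[X]) x = 0 := by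
  have : Finite L := Module.finite_of_finite K
  let := Fintype.ofFinite L
  rw [circQ_X_pow_sub_one hq, ← hq, ← hn, ← Module.card_eq_pow_finrank, FiniteField.pow_card,
    sub_self]

lemma isOrd_X_pow_sub_one_of_circQ_geom_sum_ne_zero (hq : Fintype.card K = q)
    (hn : Module.finrank K L = n)
    (hγ : IsOrd q (∑ i ∈ Finset.range n, X ^ i : K[X]) (circQ q (X - 1 : K[X]) α))
    (hδ : circQ q (∑ i ∈ Finset.range n, X ^ i : K[X]) α ≠ 0) : IsOrd q (X ^ n - 1 : K[X]) α := by
  set g : K[X] := ∑ i ∈ Finset.range n, X ^ i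
  have hfac : g * (X - 1) = X ^ n - 1 := geom_sum_mul X n
  have hfix : circQ q g α ^ q = circQ q g α := by
    have := circQ_X_pow_finrank_sub_one hq hn α
    rwa [← hfac, mul_comm, circQ_mul hq, circQ_X_sub_one hq, sub_eq_zero] at this
  have hn0 : n ≠ 0 := hn ▸ Module.finrank_pos.ne'
  refine ⟨by simpa using monic_X_pow_sub_C (1 : K) hn0, fun h => ⟨fun hh => ?_, ?_⟩⟩
  · obtain ⟨k, rfl⟩ := dvd_of_isOrd_circQ_X_sub_one hq hγ hh
    rw [mul_comm, circQ_mul hq, circQ_of_pow_eq_self hfix, mul_eq_zero, or_iff_left hδ,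
      map_eq_zero_iff _ (algebraMap K L).injective] at hh
    obtain ⟨k', rfl⟩ := dvd_iff_isRoot.2 hh
    exact ⟨k', by rw [← hfac, map_one]; ring⟩
  · rintro ⟨k, rfl⟩
    rw [circQ_mul hq, circQ_X_pow_finrank_sub_one hq hn]

lemma isNormalElem_of_isOrd_X_pow_sub_one (hq : Fintype.card K = q)
    (hn : Module.finrank K L = n) (h : IsOrd q (X ^ n - 1 : K[X]) α) : IsNormalElem K q n α := by
  have hli : LinearIndependent K fun i : Fin n => α ^ q ^ (i : ℕ) := by
    rw [Fintype.linearIndependent_iff]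
    intro c hc
    set f : K[X] := ∑ i : Fin n, C (c i) * X ^ (i : ℕ)
    have hf : f = 0 := by
      refine eq_zero_of_dvd_of_degree_lt ((h.2 f).1 ?_) ?_
      · rwa [circQ_sum_C_mul_X_pow hq]
      · have := degree_X_pow_sub_C (hn ▸ Module.finrank_pos : 0 < n) (1 : K)
        rw [map_one] at this
        exact this ▸ degree_sum_fin_lt c
    intro i
    simpa [f, finsetSum_coeff, coeff_C_mul_X_pow, Fin.val_inj] using congr_arg (coeff · i) hf
  exact ⟨basisOfLinearIndependentOfCardEqFinrank' _ hli (by simp [hn]), fun i => by simp⟩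

lemma isOrd_X_pow_sub_one_or_isOrd_geom_sum (hq : Fintype.card K = q)
    (hn : Module.finrank K L = n)
    (hγ : IsOrd q (∑ i ∈ Finset.range n, X ^ i : K[X]) (circQ q (X - 1 : K[X]) α)) :
    IsOrd q (X ^ n - 1 : K[X]) α ∨ IsOrd q (∑ i ∈ Finset.range n, X ^ i : K[X]) α := by
  by_cases hδ : circQ q (∑ i ∈ Finset.range n, X ^ i : K[X]) α = 0
  · exact .inr (isOrd_of_isOrd_circQ_X_sub_one hq hγ hδ)
  · exact .inl (isOrd_X_pow_sub_one_of_circQ_geom_sum_ne_zero hq hn hγ hδ)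

lemma isNormalElem_iff_geom_sum_ne_zero (hq : Fintype.card K = q)
    (hn : Module.finrank K L = n)
    (hγ : IsOrd q (∑ i ∈ Finset.range n, X ^ i : K[X]) (circQ q (X - 1 : K[X]) α)) :
    IsNormalElem K q n α ↔ ∑ i ∈ Finset.range n, α ^ q ^ i ≠ 0 := by
  refine ⟨IsNormalElem.geom_sum_ne_zero (hn ▸ Module.finrank_pos), fun hδ => ?_⟩
  rw [← circQ_geom_sum hq] at hδ
  exact isNormalElem_of_isOrd_X_pow_sub_one hq hn
    (isOrd_X_pow_sub_one_of_circQ_geom_sum_ne_zero hq hn hγ hδ)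

end Order

lemma exists_add_algebraMap_mul_ne_zero {K L : Type*} [Field K] [Ring L] [Nontrivial L]
    [Algebra K L] (s : L) {c : K} (hc : c ≠ 0) : ∃ t : K, s + algebraMap K L (c * t) ≠ 0 := by
  by_cases hs : s = 0
  · exact ⟨c⁻¹, by simp [hs, hc]⟩
  · exact ⟨0, by simpa using hs⟩

theorem stmt_17 (p n : ℕ) [Fact p.Prime] (hn : 1 ≤ n) (hpn : ¬ p ∣ n)
    (L : Type*) [Field L] [Algebra (ZMod p) L]
    (hrank : Module.finrank (ZMod p) L = n)
    (γ : L) (hγ : IsOrd p ((X ^ n - 1) / (X - 1) : (ZMod p)[X]) γ)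
    (β : L) (hβ : β ^ p - β = γ) :
    (∀ t : ZMod p,
        (IsOrd p (X ^ n - 1 : (ZMod p)[X]) (β + algebraMap (ZMod p) L t) ∨
          IsOrd p ((X ^ n - 1) / (X - 1) : (ZMod p)[X]) (β + algebraMap (ZMod p) L t)) ∧
        (IsNormalElem (ZMod p) p n (β + algebraMap (ZMod p) L t) ↔
          ∑ i ∈ Finset.range n, (β + algebraMap (ZMod p) L t) ^ p ^ i ≠ 0)) ∧
      ∃ t₀ : ZMod p, IsNormalElem (ZMod p) p n (β + algebraMap (ZMod p) L t₀) := by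
  have hq : Fintype.card (ZMod p) = p := ZMod.card p
  have : Module.Finite (ZMod p) L := Module.finite_of_finrank_pos (by omega)
  rw [X_pow_sub_one_div_X_sub_one] at hγ ⊢
  have hγt (t : ZMod p) : IsOrd p (∑ i ∈ Finset.range n, X ^ i : (ZMod p)[X])
      (circQ p (X - 1 : (ZMod p)[X]) (β + algebraMap (ZMod p) L t)) := by
    simpa [circQ_add_algebraMap hq, circQ_X_sub_one hq, hβ] using hγ
  refine ⟨fun t => ⟨isOrd_X_pow_sub_one_or_isOrd_geom_sum hq hrank (hγt t),
    isNormalElem_iff_geom_sum_ne_zero hq hrank (hγt t)⟩, ?_⟩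
  -- The trace of `β + t` is `Tr β + n t`, and `n ≠ 0` in `ZMod p`.
  have hn0 : (n : ZMod p) ≠ 0 := by rwa [Ne, ZMod.natCast_eq_zero_iff]
  obtain ⟨t, ht⟩ := exists_add_algebraMap_mul_ne_zero
    (circQ p (∑ i ∈ Finset.range n, X ^ i : (ZMod p)[X]) β) hn0
  refine ⟨t, (isNormalElem_iff_geom_sum_ne_zero hq hrank (hγt t)).2 ?_⟩
  simpa [← circQ_geom_sum hq, circQ_add_algebraMap hq] using ht
end
end
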